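/- arXiv:2407.08589 — 3 statements merged into one kernel-verified Lean document; each statement's English description precedes it below -/
import Mathlib

section
/- Let q be a prime power, d ≥ 2 and 1 ≤ k < d integers, and let E = F_q^d ∖ (F_q^k × {0}^{d−k}), i.e. the complement in F_q^d of the coordinate subspace consisting of vectors whose last d−k coordinates vanish. Then for every real p ∈ [1,∞) the exact identity ‖Ê‖_p^p = q^{−d} · (q^{d−k} − 1) · q^{(k−d)p} holds, and moreover ‖Ê‖_∞ = q^{k−d}. (Consequently E is (p,s)-Salem exactly when s ≤ 1 − k/d + k/(pd).) -/
/-!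
Write `V` for the coordinate subspace `F_q^k × {0}^{d-k}`. At a nonzero frequency the character
sum over all of `F_q^d` vanishes, so the transform of the complement is minus that of `V`. The
character sum over `V` factorises coordinatewise: it is `#V = q^k` on the annihilator
`V^⊥ = {0}^k × F_q^{d-k}` and `0` elsewhere. Hence `|Ê|` equals `q^{k-d}` on the `q^{d-k} - 1`
nonzero points of `V^⊥` and vanishes at every other nonzero frequency.
-/

open Finset

/-- The Fourier transform of (the indicator of) a set `E ⊆ F_q^d`:
`Ê(x) = q^{-d} ∑_{y ∈ E} χ(-x·y)`. -/
noncomputable def fourierTransform {F : Type} [Field F] [Fintype F] [DecidableEq F] {d : ℕ}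
    (χ : AddChar F ℂ) (E : Finset (Fin d → F)) (x : Fin d → F) : ℂ :=
  ((Fintype.card F : ℂ) ^ d)⁻¹ * ∑ y ∈ E, χ (-(∑ i, x i * y i))

/-- `‖Ê‖_p = ( q^{-d} ∑_{x ≠ 0} |Ê(x)|^p )^{1/p}`. -/
noncomputable def lpNorm {F : Type} [Field F] [Fintype F] [DecidableEq F] {d : ℕ}
    (χ : AddChar F ℂ) (E : Finset (Fin d → F)) (p : ℝ) : ℝ :=
  (((Fintype.card F : ℝ) ^ d)⁻¹ *
      ∑ x ∈ Finset.univ.filter (fun x : Fin d → F => x ≠ 0),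
        ‖fourierTransform χ E x‖ ^ p) ^ (1 / p)


/-- `‖Ê‖_∞ = max_{x ≠ 0} |Ê(x)|` (as a supremum over the nonzero frequencies). -/
noncomputable def linfNorm {F : Type} [Field F] [Fintype F] [DecidableEq F] {d : ℕ}
    (χ : AddChar F ℂ) (E : Finset (Fin d → F)) : ℝ :=
  sSup {r : ℝ | ∃ x : Fin d → F, x ≠ 0 ∧ r = ‖fourierTransform χ E x‖}

theorem AddChar.map_sum_eq_prod {A M ι : Type*} [AddCommMonoid A] [CommMonoid M]
    (ψ : AddChar A M) (s : Finset ι) (f : ι → A) : ψ (∑ i ∈ s, f i) = ∏ i ∈ s, ψ (f i) := by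
  induction s using Finset.cons_induction with
  | empty => simp
  | cons a s ha ih => rw [sum_cons, prod_cons, AddChar.map_add_eq_mul, ih]

theorem AddChar.sum_neg_mul_eq_ite {F R : Type*} [Field F] [Fintype F] [DecidableEq F]
    [CommRing R] [IsDomain R] {χ : AddChar F R} (hχ : χ ≠ 1) (c : F) :
    ∑ t : F, χ (-(c * t)) = if c = 0 then (Fintype.card F : R) else 0 := by
  simp_rw [← neg_mul, mul_comm (-c)]
  rw [AddChar.sum_mulShift _ (AddChar.IsPrimitive.of_ne_one hχ)]
  simp

theorem sum_piFinset_addChar_neg_dotProduct {F R ι : Type*} [CommRing F] [CommSemiring R]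
    [Fintype ι] [DecidableEq ι] (χ : AddChar F R) (t : ι → Finset F) (x : ι → F) :
    ∑ y ∈ Fintype.piFinset t, χ (-∑ i, x i * y i) = ∏ i, ∑ s ∈ t i, χ (-(x i * s)) := by
  rw [prod_univ_sum]
  refine sum_congr rfl fun y _ => ?_
  rw [← sum_neg_distrib, AddChar.map_sum_eq_prod]

theorem Fin.card_filter_le_val {n m : ℕ} : #(univ.filter fun i : Fin n => m ≤ (i : ℕ)) = n - m := by
  have h := card_filter_add_card_filter_not (s := univ) (p := fun i : Fin n => (i : ℕ) < m)
  simp only [Fin.card_filter_val_lt, not_lt, card_univ, Fintype.card_fin] at h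
  omega

section CoordVanishing

variable {F ι : Type} [Zero F] [Fintype F] [DecidableEq F] [Fintype ι] [DecidableEq ι]

def coordVanishing (P : ι → Prop) [DecidablePred P] : Finset (ι → F) :=
  univ.filter fun y => ∀ i, P i → y i = 0

variable (P : ι → Prop) [DecidablePred P]

@[simp]
theorem mem_coordVanishing {y : ι → F} : y ∈ coordVanishing P ↔ ∀ i, P i → y i = 0 := by
  simp [coordVanishing]

theorem coordVanishing_eq_piFinset :
    coordVanishing P = Fintype.piFinset fun i => if P i then {0} else (univ : Finset F) := by
  ext y
  simp only [mem_coordVanishing, Fintype.mem_piFinset]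
  refine forall_congr' fun i => ?_
  split_ifs with h <;> simp [h]

theorem card_coordVanishing :
    #(coordVanishing (F := F) P) = Fintype.card F ^ #(univ.filter fun i => ¬P i) := by
  rw [coordVanishing_eq_piFinset, Fintype.card_piFinset]
  simp_rw [apply_ite card, card_singleton, card_univ]
  rw [prod_ite, prod_const_one, prod_const, one_mul]

end CoordVanishing

section CharacterSums

variable {F ι : Type} [Field F] [Fintype F] [DecidableEq F] [Fintype ι] [DecidableEq ι]
  {χ : AddChar F ℂ}

/-- The annihilator of the vectors vanishing on `P` consists of the vectors vanishing off `P`. -/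
theorem sum_coordVanishing_addChar_neg_dotProduct (P : ι → Prop) [DecidablePred P] (hχ : χ ≠ 1)
    (x : ι → F) :
    ∑ y ∈ coordVanishing P, χ (-∑ i, x i * y i) =
      if x ∈ coordVanishing fun i => ¬P i then
        (Fintype.card F : ℂ) ^ #(univ.filter fun i => ¬P i)
      else 0 := by
  have hfactor (i : ι) : ∑ s ∈ (if P i then {0} else univ), χ (-(x i * s)) =
      if P i then 1 else if x i = 0 then (Fintype.card F : ℂ) else 0 := by
    by_cases hP : P i
    · simp [hP]
    · rw [if_neg hP, if_neg hP, AddChar.sum_neg_mul_eq_ite hχ]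
  rw [coordVanishing_eq_piFinset, sum_piFinset_addChar_neg_dotProduct]
  simp_rw [hfactor]
  rw [prod_ite, prod_const_one, one_mul, prod_ite_zero, prod_const]
  simp

theorem sum_addChar_neg_dotProduct_eq_zero (hχ : χ ≠ 1) {x : ι → F} (hx : x ≠ 0) :
    ∑ y : ι → F, χ (-∑ i, x i * y i) = 0 := by
  obtain ⟨i, hi⟩ := Function.ne_iff.mp hx
  rw [← Fintype.piFinset_univ, sum_piFinset_addChar_neg_dotProduct]
  exact prod_eq_zero (mem_univ i) (by rw [AddChar.sum_neg_mul_eq_ite hχ]; exact if_neg hi)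

end CharacterSums

section FourierTransform

variable {F : Type} [Field F] [Fintype F] [DecidableEq F] {d : ℕ} {χ : AddChar F ℂ}

theorem fourierTransform_compl (hχ : χ ≠ 1) (E : Finset (Fin d → F)) {x : Fin d → F}
    (hx : x ≠ 0) : fourierTransform χ Eᶜ x = -fourierTransform χ E x := by
  have hsum := sum_compl_add_sum E fun y => χ (-∑ i, x i * y i)
  rw [sum_addChar_neg_dotProduct_eq_zero hχ hx, add_eq_zero_iff_eq_neg] at hsum
  rw [fourierTransform, fourierTransform, hsum, mul_neg]

theorem norm_fourierTransform_compl_coordVanishing (hχ : χ ≠ 1) (P : Fin d → Prop)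
    [DecidablePred P] {x : Fin d → F} (hx : x ≠ 0) :
    ‖fourierTransform χ (coordVanishing P)ᶜ x‖ =
      if x ∈ coordVanishing fun i => ¬P i then
        (Fintype.card F : ℝ) ^ #(univ.filter fun i => ¬P i) / (Fintype.card F : ℝ) ^ d
      else 0 := by
  rw [fourierTransform_compl hχ _ hx, norm_neg, fourierTransform,
    sum_coordVanishing_addChar_neg_dotProduct P hχ, norm_mul, norm_inv]
  split_ifs <;> simp [div_eq_inv_mul]

theorem lpNorm_rpow_self (χ : AddChar F ℂ) (E : Finset (Fin d → F)) {p : ℝ} (hp : p ≠ 0) :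
    lpNorm χ E p ^ p =
      ((Fintype.card F : ℝ) ^ d)⁻¹ * ∑ x ∈ univ.filter (· ≠ 0), ‖fourierTransform χ E x‖ ^ p := by
  rw [lpNorm, ← Real.rpow_mul (by positivity), one_div_mul_cancel hp, Real.rpow_one]

theorem lpNorm_rpow_of_norm_eq_ite {E T : Finset (Fin d → F)} {c p : ℝ} (h0 : 0 ∈ T)
    (hE : ∀ x ≠ 0, ‖fourierTransform χ E x‖ = if x ∈ T then c else 0) (hp : p ≠ 0) :
    lpNorm χ E p ^ p = ((Fintype.card F : ℝ) ^ d)⁻¹ * (#T - 1) * c ^ p := by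
  have hterm : ∀ x ∈ univ.filter (· ≠ (0 : Fin d → F)),
      ‖fourierTransform χ E x‖ ^ p = if x ∈ T.erase 0 then c ^ p else 0 := by
    intro x hx
    have hx0 : x ≠ 0 := (mem_filter.mp hx).2
    simp only [hE x hx0, mem_erase, hx0, ne_eq, not_false_eq_true, true_and]
    split_ifs
    · rfl
    · exact Real.zero_rpow hp
  have hsupp : univ.filter (· ≠ (0 : Fin d → F)) ∩ T.erase 0 = T.erase 0 :=
    inter_eq_right.mpr fun x hx => by simpa using ne_of_mem_erase hx
  rw [lpNorm_rpow_self χ E hp, sum_congr rfl hterm, sum_ite_mem, hsupp, sum_const, nsmul_eq_mul,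
    cast_card_erase_of_mem h0, mul_assoc]

theorem linfNorm_eq_of_norm_eq_ite {E T : Finset (Fin d → F)} {c : ℝ} (hc : 0 ≤ c)
    (hT : ∃ x ∈ T, x ≠ 0) (hE : ∀ x ≠ 0, ‖fourierTransform χ E x‖ = if x ∈ T then c else 0) :
    linfNorm χ E = c := by
  refine IsGreatest.csSup_eq ⟨?_, ?_⟩
  · obtain ⟨x, hxT, hx⟩ := hT
    exact ⟨x, hx, by rw [hE x hx, if_pos hxT]⟩
  · rintro r ⟨x, hx, rfl⟩
    rw [hE x hx]
    split_ifs
    exacts [le_rfl, hc]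

end FourierTransform

theorem lp_complement_of_subspace_general {F : Type} [Field F] [Fintype F] [DecidableEq F]
    (d k : ℕ) (hkd : k < d)
    (χ : AddChar F ℂ) (hχ : ∃ a, χ a ≠ 1) :
    (∀ p : ℝ, 1 ≤ p →
        lpNorm χ (Finset.univ.filter fun x : Fin d → F =>
            ∀ i : Fin d, k ≤ (i : ℕ) → x i = 0)ᶜ p ^ p =
          ((Fintype.card F : ℝ) ^ d)⁻¹ * ((Fintype.card F : ℝ) ^ (d - k) - 1) *
            (Fintype.card F : ℝ) ^ (((k : ℝ) - (d : ℝ)) * p)) ∧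
      linfNorm χ (Finset.univ.filter fun x : Fin d → F =>
          ∀ i : Fin d, k ≤ (i : ℕ) → x i = 0)ᶜ =
        (Fintype.card F : ℝ) ^ ((k : ℝ) - (d : ℝ)) := by
  have hχ1 : χ ≠ 1 := fun h => hχ.elim fun a ha => ha (by simp [h])
  set V := coordVanishing (F := F) fun i : Fin d => k ≤ (i : ℕ)
  set T := coordVanishing (F := F) fun i : Fin d => ¬k ≤ (i : ℕ)
  have hV : (univ.filter fun x : Fin d → F => ∀ i : Fin d, k ≤ (i : ℕ) → x i = 0) = V := by
    ext; simp [V]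
  have hq : (0 : ℝ) < Fintype.card F := by exact_mod_cast Fintype.card_pos
  have hnorm : ∀ x ≠ 0, ‖fourierTransform χ Vᶜ x‖ =
      if x ∈ T then (Fintype.card F : ℝ) ^ ((k : ℝ) - d) else 0 := by
    intro x hx
    have hcard : #(univ.filter fun i : Fin d => ¬k ≤ (i : ℕ)) = k := by
      simp [Fin.card_filter_val_lt, hkd.le]
    rw [norm_fourierTransform_compl_coordVanishing hχ1 _ hx, hcard, Real.rpow_sub hq,
      Real.rpow_natCast, Real.rpow_natCast]
  have hT : #T = Fintype.card F ^ (d - k) := by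
    simp [T, card_coordVanishing, Fin.card_filter_le_val]
  rw [hV]
  refine ⟨fun p hp => ?_, linfNorm_eq_of_norm_eq_ite (by positivity) ?_ hnorm⟩
  · rw [lpNorm_rpow_of_norm_eq_ite (by simp [T]) hnorm (by positivity), hT,
      ← Real.rpow_mul hq.le, Nat.cast_pow]
  · refine ⟨Pi.single ⟨k, hkd⟩ 1, ?_, by simp⟩
    simp only [T, mem_coordVanishing, not_le, Pi.single_apply, Fin.ext_iff]
    exact fun i hi => if_neg hi.ne

/-- For `E = F_q^d ∖ (F_q^k × {0}^{d-k})`, the exact formulas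
`‖Ê‖_p^p = q^{-d}(q^{d-k} - 1)q^{(k-d)p}` for all `p ∈ [1,∞)`, and `‖Ê‖_∞ = q^{k-d}`. -/
theorem lp_complement_of_subspace {F : Type} [Field F] [Fintype F] [DecidableEq F]
    (d k : ℕ) (hd : 2 ≤ d) (hk : 1 ≤ k) (hkd : k < d)
    (χ : AddChar F ℂ) (hχ : ∃ a, χ a ≠ 1) :
    (∀ p : ℝ, 1 ≤ p →
        lpNorm χ (Finset.univ.filter fun x : Fin d → F =>
            ∀ i : Fin d, k ≤ (i : ℕ) → x i = 0)ᶜ p ^ p =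
          ((Fintype.card F : ℝ) ^ d)⁻¹ * ((Fintype.card F : ℝ) ^ (d - k) - 1) *
            (Fintype.card F : ℝ) ^ (((k : ℝ) - (d : ℝ)) * p)) ∧
      linfNorm χ (Finset.univ.filter fun x : Fin d → F =>
          ∀ i : Fin d, k ≤ (i : ℕ) → x i = 0)ᶜ =
        (Fintype.card F : ℝ) ^ ((k : ℝ) - (d : ℝ)) :=
  lp_complement_of_subspace_general d k hkd χ hχ
end

section
/- Let q be a prime power, d ≥ 1 an integer, E ⊆ F_q^d, and write E^c = F_q^d ∖ E for its complement. Then: (i) for every x ∈ F_q^d with x ≠ 0, Ê(x) = −(E^c)^∧(x); hence ‖Ê‖_∞ ≤ q^{−d} · #(E^c); and (ii) if E^c is nonempty and #(E^c) ≤ c·q^d for some real 0 < c < 1, then ‖Ê‖_∞ ≥ √(1−c) · q^{−d} · √(#(E^c)). (These are the quantitative bounds behind the statement that if #(E^c) ≲ q^δ then E is (∞,s)-Salem for all s < 1 − δ/d, and if #(E^c) ≳ q^γ then E is not (∞,s)-Salem for s > 1 − γ/(2d).) -/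
/-!
For `x ≠ 0` the character `y ↦ χ(-x·y)` of `F_q^d` is nontrivial, so its values sum to zero;
hence `Ê(x) = -(Eᶜ)^(x)`, and (i) follows from the triangle inequality. For (ii), Plancherel
gives `∑ₓ |(Eᶜ)^(x)|² = a` with `a = q^{-d} #Eᶜ`; removing the term `x = 0`, which is `a²`, leaves
`a (1 - a) ≥ (1 - c) a` spread over fewer than `q^d` nonzero frequencies, so one of them carries
more than `(1 - c) a q^{-d}`.
-/

open Finset

open Matrix ComplexConjugate

section Orthogonality

variable {ι F R : Type*} [Fintype ι] [DecidableEq ι] [Field F] [Fintype F] [DecidableEq F]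
  [CommRing R] [IsDomain R]

theorem sum_addChar_dotProduct {ψ : AddChar F R} (hψ : ψ ≠ 1) (w : ι → F) :
    ∑ y : ι → F, ψ (y ⬝ᵥ w) = if w = 0 then (Fintype.card (ι → F) : R) else 0 := by
  split_ifs with hw
  · simp [hw]
  · let φ : AddChar (ι → F) R :=
      { toFun := fun y => ψ (y ⬝ᵥ w)
        map_zero_eq_one' := by simp
        map_add_eq_mul' := fun a b => by simp [add_dotProduct, AddChar.map_add_eq_mul] }
    obtain ⟨i, hi⟩ := Function.ne_iff.1 hw
    obtain ⟨a, ha⟩ := AddChar.ne_one_iff.1 hψ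
    have hφ : φ ≠ 1 := AddChar.ne_one_iff.2
      ⟨Pi.single i (a / w i), by simpa [φ, single_dotProduct, div_mul_cancel₀ _ hi] using ha⟩
    exact AddChar.sum_eq_zero_of_ne_one hφ

end Orthogonality

section Fourier

variable {F : Type} [Field F] [Fintype F] [DecidableEq F] {d : ℕ} {χ : AddChar F ℂ}

lemma fourierTransform_eq_sum_dotProduct (S : Finset (Fin d → F)) (x : Fin d → F) :
    fourierTransform χ S x = ((Fintype.card F : ℂ) ^ d)⁻¹ * ∑ y ∈ S, χ (y ⬝ᵥ -x) := by
  simp only [fourierTransform, dotProduct_neg, dotProduct_comm _ x]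
  rfl

lemma fourierTransform_zero (S : Finset (Fin d → F)) :
    fourierTransform χ S 0 = ((Fintype.card F : ℂ) ^ d)⁻¹ * #S := by
  simp [fourierTransform]

lemma fourierTransform_univ (hχ : χ ≠ 1) {x : Fin d → F} (hx : x ≠ 0) :
    fourierTransform χ univ x = 0 := by
  rw [fourierTransform_eq_sum_dotProduct, sum_addChar_dotProduct hχ, if_neg (neg_ne_zero.2 hx),
    mul_zero]

lemma fourierTransform_add_compl (S : Finset (Fin d → F)) (x : Fin d → F) :
    fourierTransform χ S x + fourierTransform χ Sᶜ x = fourierTransform χ univ x := by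
  simp only [fourierTransform, ← mul_add, sum_add_sum_compl]

lemma fourierTransform_eq_neg_compl (hχ : χ ≠ 1) (S : Finset (Fin d → F)) {x : Fin d → F}
    (hx : x ≠ 0) : fourierTransform χ S x = -fourierTransform χ Sᶜ x :=
  eq_neg_of_add_eq_zero_left <| (fourierTransform_add_compl S x).trans (fourierTransform_univ hχ hx)

lemma norm_fourierTransform_le (S : Finset (Fin d → F)) (x : Fin d → F) :
    ‖fourierTransform χ S x‖ ≤ ((Fintype.card F : ℝ) ^ d)⁻¹ * #S := by
  rw [fourierTransform, norm_mul, norm_inv, norm_pow, Complex.norm_natCast]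
  gcongr
  exact (norm_sum_le _ _).trans (by simp)

theorem sum_norm_fourierTransform_sq (hχ : χ ≠ 1) (S : Finset (Fin d → F)) :
    ∑ x, ‖fourierTransform χ S x‖ ^ 2 = ((Fintype.card F : ℝ) ^ d)⁻¹ * #S := by
  set c : ℂ := ((Fintype.card F : ℂ) ^ d)⁻¹
  have hpoint (x : Fin d → F) : fourierTransform χ S x * conj (fourierTransform χ S x) =
      c ^ 2 * ∑ y ∈ S, ∑ z ∈ S, χ (x ⬝ᵥ (z - y)) := by
    rw [fourierTransform_eq_sum_dotProduct, map_mul, map_sum, mul_mul_mul_comm, sum_mul_sum]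
    congr 1
    · simp [c, sq]
    refine sum_congr rfl fun y _ => sum_congr rfl fun z _ => ?_
    rw [← AddChar.map_neg_eq_conj, ← AddChar.map_add_eq_mul, dotProduct_sub, dotProduct_comm x,
      dotProduct_comm x, dotProduct_neg, dotProduct_neg]
    ring_nf
  suffices ∑ x, fourierTransform χ S x * conj (fourierTransform χ S x) = c * #S by
    apply Complex.ofReal_injective
    push_cast
    simpa only [Complex.mul_conj', c] using this
  calc ∑ x, fourierTransform χ S x * conj (fourierTransform χ S x)
      = c ^ 2 * ∑ y ∈ S, ∑ z ∈ S, ∑ x : Fin d → F, χ (x ⬝ᵥ (z - y)) := by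
        rw [sum_congr rfl fun x _ => hpoint x, ← mul_sum, sum_comm]
        exact congrArg _ (sum_congr rfl fun y _ => sum_comm)
    _ = c ^ 2 * ∑ y ∈ S, (Fintype.card (Fin d → F) : ℂ) := by
        simp_rw [sum_addChar_dotProduct hχ, sub_eq_zero]
        simp
    _ = c * #S := by
        simp only [sum_const, nsmul_eq_mul, Fintype.card_fun, Fintype.card_fin, Nat.cast_pow, c]
        field_simp

theorem sum_erase_zero_norm_fourierTransform_sq (hχ : χ ≠ 1) (S : Finset (Fin d → F)) :
    ∑ x ∈ univ.erase 0, ‖fourierTransform χ S x‖ ^ 2 =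
      ((Fintype.card F : ℝ) ^ d)⁻¹ * #S * (1 - ((Fintype.card F : ℝ) ^ d)⁻¹ * #S) := by
  have h := sum_norm_fourierTransform_sq hχ S
  rw [← sum_erase_add _ _ (mem_univ 0), fourierTransform_zero] at h
  have h0 : ‖((Fintype.card F : ℂ) ^ d)⁻¹ * #S‖ = ((Fintype.card F : ℝ) ^ d)⁻¹ * #S := by
    simp
  rw [h0] at h
  linear_combination h

theorem exists_ne_zero_lt_norm_fourierTransform_sq (hχ : χ ≠ 1) {S : Finset (Fin d → F)}
    (hS : S.Nonempty) (hSq : (#S : ℝ) < (Fintype.card F : ℝ) ^ d) :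
    ∃ x ≠ 0, ((Fintype.card F : ℝ) ^ d)⁻¹ * #S * (1 - ((Fintype.card F : ℝ) ^ d)⁻¹ * #S) /
      (Fintype.card F : ℝ) ^ d < ‖fourierTransform χ S x‖ ^ 2 := by
  set Q : ℝ := (Fintype.card F : ℝ) ^ d
  set a : ℝ := Q⁻¹ * #S
  have hQ : 0 < Q := by positivity
  have ha : 0 < a * (1 - a) / Q := by
    have : a < 1 := by rwa [inv_mul_lt_one₀ hQ]
    have : 0 < a := mul_pos (inv_pos.2 hQ) (by exact_mod_cast hS.card_pos)
    positivity
  have hcard : (#(univ.erase (0 : Fin d → F)) : ℝ) + 1 = Q := by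
    rw [← Nat.cast_add_one, card_erase_add_one (mem_univ _)]
    simp [Q]
  obtain ⟨x, hx, hlt⟩ := exists_lt_of_sum_lt (s := univ.erase 0) (f := fun _ => a * (1 - a) / Q)
    (g := fun x => ‖fourierTransform χ S x‖ ^ 2) <| by
      rw [sum_const, nsmul_eq_mul, sum_erase_zero_norm_fourierTransform_sq hχ]
      calc (#(univ.erase (0 : Fin d → F)) : ℝ) * (a * (1 - a) / Q)
          < Q * (a * (1 - a) / Q) := by gcongr; linarith
        _ = a * (1 - a) := by field_simp
  exact ⟨x, ne_of_mem_erase hx, hlt⟩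

theorem exists_ne_zero_le_norm_fourierTransform (hχ : χ ≠ 1) {S : Finset (Fin d → F)}
    (hS : S.Nonempty) {c : ℝ} (hc : c < 1) (hSc : (#S : ℝ) ≤ c * (Fintype.card F : ℝ) ^ d) :
    ∃ x ≠ 0, √(1 - c) * ((Fintype.card F : ℝ) ^ d)⁻¹ * √(#S : ℝ) ≤
      ‖fourierTransform χ S x‖ := by
  set Q : ℝ := (Fintype.card F : ℝ) ^ d
  have hQ : 0 < Q := by positivity
  obtain ⟨x, hx, hlt⟩ := exists_ne_zero_lt_norm_fourierTransform_sq hχ hS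
    (hSc.trans_lt (mul_lt_of_lt_one_left hQ hc))
  refine ⟨x, hx, le_of_pow_le_pow_left₀ two_ne_zero (norm_nonneg _) (le_of_lt ?_)⟩
  have hc' : Q⁻¹ * #S ≤ c := by rwa [inv_mul_le_iff₀ hQ, mul_comm]
  calc (√(1 - c) * Q⁻¹ * √(#S : ℝ)) ^ 2 = (1 - c) * (Q⁻¹ * #S) / Q := by
        rw [mul_pow, mul_pow, Real.sq_sqrt (by linarith), Real.sq_sqrt (by positivity)]
        ring
    _ ≤ Q⁻¹ * #S * (1 - Q⁻¹ * #S) / Q := by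
        rw [mul_comm (1 - c)]
        gcongr
    _ < ‖fourierTransform χ S x‖ ^ 2 := hlt

end Fourier

section LInfNorm

variable {F : Type} [Field F] [Fintype F] [DecidableEq F] {d : ℕ} {χ : AddChar F ℂ}
  {E : Finset (Fin d → F)}

lemma linfNorm_le {B : ℝ} (hB : 0 ≤ B) (h : ∀ x ≠ 0, ‖fourierTransform χ E x‖ ≤ B) :
    linfNorm χ E ≤ B :=
  Real.sSup_le (by rintro _ ⟨x, hx, rfl⟩; exact h x hx) hB

lemma norm_fourierTransform_le_linfNorm {x : Fin d → F} (hx : x ≠ 0) :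
    ‖fourierTransform χ E x‖ ≤ linfNorm χ E :=
  le_csSup ((Set.finite_range fun x => ‖fourierTransform χ E x‖).subset
    (by rintro _ ⟨x, -, rfl⟩; exact ⟨x, rfl⟩)).bddAbove ⟨x, hx, rfl⟩

end LInfNorm

theorem linf_complement_general {F : Type} [Field F] [Fintype F] [DecidableEq F] {d : ℕ}
    (χ : AddChar F ℂ) (hχ : ∃ a, χ a ≠ 1)
    (E : Finset (Fin d → F)) (c : ℝ) :
    (∀ x : Fin d → F, x ≠ 0 →
        fourierTransform χ E x = -fourierTransform χ Eᶜ x) ∧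
      linfNorm χ E ≤ ((Fintype.card F : ℝ) ^ d)⁻¹ * (Eᶜ.card : ℝ) ∧
      (Eᶜ.Nonempty → 0 < c → c < 1 →
        (Eᶜ.card : ℝ) ≤ c * (Fintype.card F : ℝ) ^ d →
        Real.sqrt (1 - c) * ((Fintype.card F : ℝ) ^ d)⁻¹ * Real.sqrt (Eᶜ.card : ℝ) ≤
          linfNorm χ E) := by
  have hχ : χ ≠ 1 := AddChar.ne_one_iff.2 hχ
  have hcompl {x : Fin d → F} (hx : x ≠ 0) :
      ‖fourierTransform χ E x‖ = ‖fourierTransform χ Eᶜ x‖ := by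
    rw [fourierTransform_eq_neg_compl hχ E hx, norm_neg]
  refine ⟨fun x hx => fourierTransform_eq_neg_compl hχ E hx,
    linfNorm_le (by positivity) fun x hx => hcompl hx ▸ norm_fourierTransform_le _ _,
    fun hne _ hc hcard => ?_⟩
  obtain ⟨x, hx, hle⟩ := exists_ne_zero_le_norm_fourierTransform hχ hne hc hcard
  exact hle.trans (hcompl hx ▸ norm_fourierTransform_le_linfNorm hx)

/-- (i) For `x ≠ 0` the Fourier transforms of `E` and of its complement `Eᶜ` are
negatives of each other, so `‖Ê‖_∞ ≤ q^{-d} #(Eᶜ)`; (ii) if moreover `Eᶜ` is nonempty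
with `#(Eᶜ) ≤ c q^d` for some `0 < c < 1`, then `‖Ê‖_∞ ≥ √(1-c) q^{-d} √(#(Eᶜ))`. -/
theorem linf_complement {F : Type} [Field F] [Fintype F] [DecidableEq F] {d : ℕ}
    (hd : 1 ≤ d) (χ : AddChar F ℂ) (hχ : ∃ a, χ a ≠ 1)
    (E : Finset (Fin d → F)) (c : ℝ) :
    (∀ x : Fin d → F, x ≠ 0 →
        fourierTransform χ E x = -fourierTransform χ Eᶜ x) ∧
      linfNorm χ E ≤ ((Fintype.card F : ℝ) ^ d)⁻¹ * (Eᶜ.card : ℝ) ∧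
      (Eᶜ.Nonempty → 0 < c → c < 1 →
        (Eᶜ.card : ℝ) ≤ c * (Fintype.card F : ℝ) ^ d →
        Real.sqrt (1 - c) * ((Fintype.card F : ℝ) ^ d)⁻¹ * Real.sqrt (Eᶜ.card : ℝ) ≤
          linfNorm χ E) :=
  linf_complement_general χ hχ E c
end

section
/- Fix an integer d ≥ 2, a real s ∈ (0, 1/2], and a real A ≥ 1. There exist constants C, c > 0 (depending only on d, s, A) such that for every odd prime power q and every E ⊆ F_q^d satisfying #E ≥ C·q^{d/2} and ‖Ê‖₄ ≤ A·q^{−d}·(#E)^{1−s}, the distance set D(E) = { (x₁−y₁)² + ⋯ + (x_d−y_d)² : x, y ∈ E } ⊆ F_q satisfies #D(E) ≥ c · min( q, q^{1−d}·(#E)^{4s} ). In particular, if E is (4, 1/2)-Salem and #E ≥ C q^{d/2}, then #D(E) ≳ q. -/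
open Finset

/-!
By Cauchy–Schwarz, `#E⁴ ≤ #D(E) · Λ`, where `Λ` counts pairs of pairs of points of `E` at equal
distance. Orthogonality of characters gives `q Λ = ∑_r |T(r)|²` with
`T(r) = ∑_{x,y ∈ E} χ(r ‖x - y‖²)`. Here `T(0) = #E²`, and for `r ≠ 0` completing the square and
evaluating the quadratic Gauss sum (of modulus `√q`) gives
`q^d |T(r)|² = |∑_m |S(m)|² χ(-‖m‖² / 4r)|²`, where `S(m) = ∑_{x ∈ E} χ(m · x)`. As `r ↦ -1/4r`
permutes `F`, Plancherel on `F` and the bound `2 q^{d-1}` on the size of spheres give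
`∑_{r ≠ 0} |T(r)|² ≤ 2 ∑_m |S(m)|⁴`. Hence `q Λ ≤ 3 #E⁴ + 2 ∑_{m ≠ 0} |S(m)|⁴`, and the last sum
equals `q^{5d} ‖Ê‖₄⁴ ≤ A⁴ q^d #E^{4-4s}`.
-/

section Fibers

variable {α β : Type*} [DecidableEq β] (s : Finset α) (f : α → β)

theorem sq_card_le_card_image_mul_sum_card_fiber :
    #s ^ 2 ≤ #(s.image f) * ∑ a ∈ s, #{b ∈ s | f b = f a} := by
  have hfiber : ∑ a ∈ s, #{b ∈ s | f b = f a} = ∑ t ∈ s.image f, #{b ∈ s | f b = t} ^ 2 := by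
    rw [sum_comp (fun t => #{b ∈ s | f b = t}) f]
    simp [sq]
  rw [hfiber, card_eq_sum_card_image f s]
  exact sq_sum_le_card_mul_sum_sq

theorem sum_mul_sum_fiber_le {K : ℝ} (hK : ∀ t, (#{a ∈ s | f a = t} : ℝ) ≤ K) (w : α → ℝ) :
    ∑ a ∈ s, w a * ∑ b ∈ s with f b = f a, w b ≤ K * ∑ a ∈ s, w a ^ 2 := by
  have hmaps : ∀ a ∈ s, f a ∈ s.image f := fun a ha => mem_image_of_mem f ha
  calc ∑ a ∈ s, w a * ∑ b ∈ s with f b = f a, w b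
      = ∑ t ∈ s.image f, (∑ b ∈ s with f b = t, w b) ^ 2 := by
        rw [← sum_fiberwise_of_maps_to hmaps]
        refine sum_congr rfl fun t _ => ?_
        rw [sq, sum_mul]
        exact sum_congr rfl fun a ha => by rw [(mem_filter.1 ha).2]
    _ ≤ ∑ t ∈ s.image f, K * ∑ b ∈ s with f b = t, w b ^ 2 :=
        sum_le_sum fun t _ => sq_sum_le_card_mul_sum_sq.trans <|
          mul_le_mul_of_nonneg_right (hK t) (sum_nonneg fun _ _ => sq_nonneg _)
    _ = K * ∑ a ∈ s, w a ^ 2 := by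
        rw [← mul_sum, sum_fiberwise_of_maps_to hmaps]

end Fibers

theorem card_filter_pow_eq_le {R : Type*} [CommRing R] [IsDomain R] [Fintype R] [DecidableEq R]
    {n : ℕ} (hn : 0 < n) (c : R) : #{u : R | u ^ n = c} ≤ n := by
  calc #{u : R | u ^ n = c} ≤ #(Polynomial.nthRootsFinset n c) :=
        card_le_card fun u hu => (Polynomial.mem_nthRootsFinset hn c).2 (mem_filter.1 hu).2
    _ ≤ n := by
        rw [Polynomial.nthRootsFinset_def]
        exact (Multiset.toFinset_card_le _).trans (Polynomial.card_nthRoots n c)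

section SqNorm

variable {R ι : Type*} [CommRing R] [Fintype ι]

def sqNorm (x : ι → R) : R := ∑ i, x i ^ 2

theorem sqNorm_neg (x : ι → R) : sqNorm (-x) = sqNorm x := by
  simp [sqNorm]

theorem card_sqNorm_eq_le [IsDomain R] [Fintype R] [DecidableEq R] (n : ℕ) (t : R) :
    #{m : Fin (n + 1) → R | sqNorm m = t} ≤ 2 * Fintype.card R ^ n := by
  rw [card_filter, ← (Fin.consEquiv fun _ => R).sum_comp, Fintype.sum_prod_type_right]
  calc ∑ g : Fin n → R, ∑ u : R, (if sqNorm ((Fin.consEquiv fun _ => R) (u, g)) = t then 1 else 0)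
      ≤ ∑ _g : Fin n → R, 2 := sum_le_sum fun g _ => by
        rw [← card_filter]
        refine (card_le_card fun u hu => ?_).trans (card_filter_pow_eq_le two_pos (t - sqNorm g))
        simp only [mem_filter, mem_univ, true_and, Fin.consEquiv_apply, sqNorm,
          Fin.sum_univ_succ, Fin.cons_zero, Fin.cons_succ] at hu
        simp [sqNorm, ← hu]
    _ = 2 * Fintype.card R ^ n := by simp [mul_comm]

end SqNorm

theorem four_ne_zero_of_two_ne_zero {R : Type*} [Semiring R] [NoZeroDivisors R]
    (h2 : (2 : R) ≠ 0) : (4 : R) ≠ 0 := by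
  rw [show (4 : R) = 2 * 2 by norm_num]
  exact mul_ne_zero h2 h2

section Characters

variable {F : Type*} [Field F] [Fintype F] {ψ : AddChar F ℂ}

def quadGaussSum (ψ : AddChar F ℂ) (r : F) : ℂ := ∑ t, ψ (r * t ^ 2)

theorem sum_apply_mul_sq_add_mul (h2 : (2 : F) ≠ 0) {r : F} (hr : r ≠ 0) (b : F) :
    ∑ t, ψ (r * t ^ 2 + b * t) = ψ (-(4 * r)⁻¹ * b ^ 2) * quadGaussSum ψ r := by
  have h4 := four_ne_zero_of_two_ne_zero h2
  rw [quadGaussSum, mul_sum]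
  refine Fintype.sum_equiv (Equiv.addRight (b / (2 * r))) _ _ fun t => ?_
  rw [← AddChar.map_add_eq_mul, Equiv.coe_addRight]
  congr 1
  field_simp
  ring

variable [DecidableEq F]

theorem sum_norm_sq_sum_mul_apply_mul {α : Type*} (hψ : ψ ≠ 1) (s : Finset α) (f : α → F)
    (w : α → ℝ) :
    ∑ r : F, ‖∑ a ∈ s, (w a : ℂ) * ψ (r * f a)‖ ^ 2 =
      Fintype.card F * ∑ a ∈ s, w a * ∑ b ∈ s with f b = f a, w b := by
  apply Complex.ofReal_injective
  have hpair : ∀ r a b, (w a : ℂ) * ψ (r * f a) * (starRingEnd ℂ) ((w b : ℂ) * ψ (r * f b)) =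
      w a * w b * ψ (r * (f a - f b)) := by
    intro r a b
    rw [(starRingEnd ℂ).map_mul, Complex.conj_ofReal, ← AddChar.map_neg_eq_conj, mul_sub,
      sub_eq_add_neg, AddChar.map_add_eq_mul]
    ring
  push_cast
  simp_rw [← Complex.mul_conj', map_sum, sum_mul_sum, hpair]
  rw [sum_comm, mul_sum]
  refine sum_congr rfl fun a _ => ?_
  rw [sum_comm, sum_filter, mul_sum, mul_sum]
  refine sum_congr rfl fun b _ => ?_
  rw [← mul_sum, AddChar.sum_mulShift _ (AddChar.IsPrimitive.of_ne_one hψ)]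
  simp only [sub_eq_zero, eq_comm (a := f b)]
  split_ifs <;> push_cast <;> ring

theorem norm_sq_quadGaussSum (hψ : ψ ≠ 1) (h2 : (2 : F) ≠ 0) {r : F} (hr : r ≠ 0) :
    ‖quadGaussSum ψ r‖ ^ 2 = Fintype.card F := by
  have h4 := four_ne_zero_of_two_ne_zero h2
  have hconj : (starRingEnd ℂ) (quadGaussSum ψ r) = ∑ u, ψ (-(4 * r)⁻¹ * (2 * r * u) ^ 2) := by
    rw [quadGaussSum, map_sum]
    refine sum_congr rfl fun u _ => ?_
    rw [← AddChar.map_neg_eq_conj]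
    congr 1
    field_simp
    ring
  have hinner : ∀ t : F, ∑ u, ψ (r * t ^ 2 + 2 * r * u * t) =
      ψ (r * t ^ 2) * ∑ u, ψ (u * (2 * r * t)) := by
    intro t
    rw [mul_sum]
    refine sum_congr rfl fun u _ => ?_
    rw [← AddChar.map_add_eq_mul]
    ring_nf
  apply Complex.ofReal_injective
  push_cast
  rw [← Complex.mul_conj', hconj, mul_sum]
  simp_rw [mul_comm (quadGaussSum ψ r), ← sum_apply_mul_sq_add_mul h2 hr]
  rw [sum_comm]
  simp_rw [hinner, AddChar.sum_mulShift _ (AddChar.IsPrimitive.of_ne_one hψ), mul_eq_zero, h2, hr,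
    false_or]
  simp

end Characters

section ExpSums

variable {F : Type*} [Field F] [Fintype F] {ψ : AddChar F ℂ} {ι : Type*} [Fintype ι]

def expSum (ψ : AddChar F ℂ) (E : Finset (ι → F)) (m : ι → F) : ℂ := ∑ x ∈ E, ψ (m ⬝ᵥ x)

def distExpSum (ψ : AddChar F ℂ) (E : Finset (ι → F)) (r : F) : ℂ :=
  ∑ p ∈ E ×ˢ E, ψ (r * sqNorm (p.1 - p.2))

theorem sum_sum_apply_dotProduct_sub (E : Finset (ι → F)) (m : ι → F) :
    ∑ x ∈ E, ∑ y ∈ E, ψ (m ⬝ᵥ (x - y)) = (‖expSum ψ E m‖ ^ 2 : ℝ) := by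
  rw [Complex.ofReal_pow, ← Complex.mul_conj', expSum, map_sum, sum_mul_sum]
  simp_rw [dotProduct_sub, sub_eq_add_neg, AddChar.map_add_eq_mul, AddChar.map_neg_eq_conj]

variable [DecidableEq ι]

theorem sum_apply_mul_sqNorm_add_dotProduct (h2 : (2 : F) ≠ 0) {r : F} (hr : r ≠ 0)
    (b : ι → F) :
    ∑ x : ι → F, ψ (r * sqNorm x + b ⬝ᵥ x) =
      ψ (-(4 * r)⁻¹ * sqNorm b) * quadGaussSum ψ r ^ Fintype.card ι := by
  have hprod : ∀ x : ι → F, ψ (r * sqNorm x + b ⬝ᵥ x) = ∏ i, ψ (r * x i ^ 2 + b i * x i) := by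
    intro x
    rw [sqNorm, dotProduct, mul_sum, ← sum_add_distrib, AddChar.map_sum_eq_prod]
  simp_rw [hprod]
  rw [← Fintype.prod_sum fun i t => ψ (r * t ^ 2 + b i * t),
    Fintype.prod_congr _ _ fun i => sum_apply_mul_sq_add_mul h2 hr (b i), prod_mul_distrib,
    prod_const, card_univ, ← AddChar.map_sum_eq_prod, ← mul_sum, sqNorm]

variable [DecidableEq F]

theorem sum_apply_dotProduct_eq_ite (hψ : ψ ≠ 1) (v : ι → F) :
    ∑ m : ι → F, ψ (m ⬝ᵥ v) = if v = 0 then (Fintype.card F : ℂ) ^ Fintype.card ι else 0 := by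
  simp_rw [dotProduct, AddChar.map_sum_eq_prod]
  rw [← Fintype.prod_sum fun i t => ψ (t * v i),
    Fintype.prod_congr _ _ fun i => AddChar.sum_mulShift (v i) (AddChar.IsPrimitive.of_ne_one hψ)]
  simp_rw [Nat.cast_ite, Nat.cast_zero, Fintype.prod_ite_zero, prod_const, card_univ, funext_iff,
    Pi.zero_apply]

theorem card_pow_mul_apply_mul_sqNorm (hψ : ψ ≠ 1) (h2 : (2 : F) ≠ 0) {r : F} (hr : r ≠ 0)
    (u : ι → F) :
    (Fintype.card F : ℂ) ^ Fintype.card ι * ψ (r * sqNorm u) =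
      quadGaussSum ψ r ^ Fintype.card ι * ∑ m, ψ (-(4 * r)⁻¹ * sqNorm m) * ψ (m ⬝ᵥ u) := by
  calc (Fintype.card F : ℂ) ^ Fintype.card ι * ψ (r * sqNorm u)
      = ∑ x, ψ (r * sqNorm x) * ∑ m, ψ (m ⬝ᵥ (x + u)) := by
        simp_rw [sum_apply_dotProduct_eq_ite hψ, add_eq_zero_iff_eq_neg, mul_ite, mul_zero,
          sum_ite_eq', mem_univ, if_true, sqNorm_neg, mul_comm]
    _ = ∑ m, (∑ x, ψ (r * sqNorm x + m ⬝ᵥ x)) * ψ (m ⬝ᵥ u) := by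
        simp_rw [mul_sum, sum_mul]
        rw [sum_comm]
        simp_rw [dotProduct_add, AddChar.map_add_eq_mul, mul_assoc]
    _ = _ := by
        rw [mul_sum]
        simp_rw [sum_apply_mul_sqNorm_add_dotProduct h2 hr]
        exact sum_congr rfl fun m _ => by ring

theorem card_pow_mul_distExpSum (hψ : ψ ≠ 1) (h2 : (2 : F) ≠ 0) {r : F} (hr : r ≠ 0)
    (E : Finset (ι → F)) :
    (Fintype.card F : ℂ) ^ Fintype.card ι * distExpSum ψ E r =
      quadGaussSum ψ r ^ Fintype.card ι *
        ∑ m, (‖expSum ψ E m‖ ^ 2 : ℝ) * ψ (-(4 * r)⁻¹ * sqNorm m) := by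
  simp_rw [distExpSum, mul_sum, card_pow_mul_apply_mul_sqNorm hψ h2 hr, ← mul_sum]
  rw [sum_comm]
  refine congrArg _ (sum_congr rfl fun m _ => ?_)
  rw [← mul_sum, sum_product, sum_sum_apply_dotProduct_sub, mul_comm]

theorem card_pow_mul_norm_sq_distExpSum (hψ : ψ ≠ 1) (h2 : (2 : F) ≠ 0) {r : F} (hr : r ≠ 0)
    (E : Finset (ι → F)) :
    (Fintype.card F : ℝ) ^ Fintype.card ι * ‖distExpSum ψ E r‖ ^ 2 =
      ‖∑ m, (‖expSum ψ E m‖ ^ 2 : ℝ) * ψ (-(4 * r)⁻¹ * sqNorm m)‖ ^ 2 := by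
  have h := congrArg (‖·‖ ^ 2) (card_pow_mul_distExpSum hψ h2 hr E)
  simp only [norm_mul, mul_pow, norm_pow, Complex.norm_natCast] at h
  have hq : (0 : ℝ) < (Fintype.card F : ℝ) ^ Fintype.card ι := by positivity
  rw [pow_right_comm ‖quadGaussSum ψ r‖, norm_sq_quadGaussSum hψ h2 hr] at h
  exact mul_left_cancel₀ hq.ne' (by linear_combination h)

end ExpSums

section Energy

variable {F : Type*} [Field F] [Fintype F] [DecidableEq F] {ψ : AddChar F ℂ} {n : ℕ}

def distanceEnergy {ι : Type*} [Fintype ι] (E : Finset (ι → F)) : ℕ :=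
  ∑ p ∈ E ×ˢ E, #{p' ∈ E ×ˢ E | sqNorm (p'.1 - p'.2) = sqNorm (p.1 - p.2)}

theorem sum_ne_zero_norm_sq_distExpSum_le (hψ : ψ ≠ 1) (h2 : (2 : F) ≠ 0)
    (E : Finset (Fin (n + 1) → F)) :
    ∑ r with r ≠ 0, ‖distExpSum ψ E r‖ ^ 2 ≤ 2 * ∑ m, ‖expSum ψ E m‖ ^ 4 := by
  have hlevel : ∀ t, (#{m : Fin (n + 1) → F | sqNorm m = t} : ℝ) ≤ 2 * Fintype.card F ^ n :=
    fun t => by exact_mod_cast card_sqNorm_eq_le n t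
  set q : ℝ := (Fintype.card F : ℝ)
  set a : (Fin (n + 1) → F) → ℝ := fun m => ‖expSum ψ E m‖ ^ 2
  set B : F → ℝ := fun u => ‖∑ m, (a m : ℂ) * ψ (u * sqNorm m)‖ ^ 2
  have h4 := four_ne_zero_of_two_ne_zero h2
  -- bijective on all of `F` since `0⁻¹ = 0`
  have hbij : Function.Bijective fun r : F => -(4 * r)⁻¹ :=
    ((neg_injective.comp inv_injective).comp (mul_right_injective₀ h4)).bijective_of_finite
  have hq : 0 < q ^ (n + 1) := by positivity
  refine le_of_mul_le_mul_left ?_ hq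
  calc q ^ (n + 1) * ∑ r with r ≠ 0, ‖distExpSum ψ E r‖ ^ 2
      = ∑ r with r ≠ 0, B (-(4 * r)⁻¹) := by
        rw [mul_sum]
        refine sum_congr rfl fun r hr => ?_
        have := card_pow_mul_norm_sq_distExpSum hψ h2 (mem_filter.1 hr).2 E
        rwa [Fintype.card_fin] at this
    _ ≤ ∑ r, B (-(4 * r)⁻¹) :=
        sum_le_sum_of_subset_of_nonneg (filter_subset _ _) fun _ _ _ => sq_nonneg _
    _ = ∑ u, B u := Fintype.sum_bijective _ hbij _ _ fun _ => rfl
    _ = q * ∑ m, a m * ∑ m' with sqNorm m' = sqNorm m, a m' :=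
        sum_norm_sq_sum_mul_apply_mul hψ univ sqNorm a
    _ ≤ q * (2 * q ^ n * ∑ m, a m ^ 2) := by
        gcongr
        exact sum_mul_sum_fiber_le univ sqNorm hlevel a
    _ = q ^ (n + 1) * (2 * ∑ m, ‖expSum ψ E m‖ ^ 4) := by
        simp only [a, ← pow_mul]
        ring

theorem card_mul_distanceEnergy_le (hψ : ψ ≠ 1) (h2 : (2 : F) ≠ 0)
    (E : Finset (Fin (n + 1) → F)) :
    (Fintype.card F : ℝ) * distanceEnergy E ≤
      3 * (#E : ℝ) ^ 4 + 2 * ∑ m with m ≠ 0, ‖expSum ψ E m‖ ^ 4 := by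
  have hplancherel := sum_norm_sq_sum_mul_apply_mul hψ (E ×ˢ E) (fun p => sqNorm (p.1 - p.2)) 1
  simp only [Pi.one_apply, Complex.ofReal_one, one_mul, sum_const, nsmul_eq_mul, mul_one]
    at hplancherel
  have hzero : ‖distExpSum ψ E 0‖ ^ 2 = (#E : ℝ) ^ 4 := by
    simp only [distExpSum, zero_mul, AddChar.map_zero_eq_one, sum_const, card_product,
      nsmul_eq_mul, Nat.cast_mul, mul_one, Complex.norm_mul, RCLike.norm_natCast]
    ring
  have hexpSum_zero : ‖expSum ψ E 0‖ ^ 4 = (#E : ℝ) ^ 4 := by simp [expSum]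
  have hne_zero := sum_ne_zero_norm_sq_distExpSum_le hψ h2 E
  rw [← add_sum_erase univ _ (mem_univ 0), hexpSum_zero, ← filter_ne'] at hne_zero
  rw [distanceEnergy, Nat.cast_sum, ← hplancherel]
  change ∑ r, ‖distExpSum ψ E r‖ ^ 2 ≤ _
  rw [← add_sum_erase univ _ (mem_univ 0), hzero, ← filter_ne']
  linarith

end Energy

section Fourier

variable {F : Type} [Field F] [Fintype F] [DecidableEq F] {d : ℕ}

theorem norm_fourierTransform (χ : AddChar F ℂ) (E : Finset (Fin d → F)) (x : Fin d → F) :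
    ‖fourierTransform χ E x‖ = ‖expSum χ E x‖ / (Fintype.card F : ℝ) ^ d := by
  rw [fourierTransform, norm_mul, norm_inv, norm_pow, Complex.norm_natCast, inv_mul_eq_div,
    expSum, ← Complex.norm_conj, map_sum]
  simp_rw [← AddChar.map_neg_eq_conj, neg_neg]
  rfl

theorem sum_norm_expSum_pow_four_eq (χ : AddChar F ℂ) (E : Finset (Fin d → F)) :
    ∑ m with m ≠ 0, ‖expSum χ E m‖ ^ 4 = (Fintype.card F : ℝ) ^ (5 * d) * lpNorm χ E 4 ^ 4 := by
  have hq : (0 : ℝ) < (Fintype.card F : ℝ) ^ d := by positivity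
  have hlp : lpNorm χ E 4 ^ 4 =
      ((Fintype.card F : ℝ) ^ d)⁻¹ * ∑ x with x ≠ 0, ‖fourierTransform χ E x‖ ^ 4 := by
    rw [lpNorm, ← Real.rpow_natCast, ← Real.rpow_mul (by positivity)]
    norm_num
  simp_rw [hlp, norm_fourierTransform, div_pow, ← sum_div, ← pow_mul]
  field_simp
  ring

theorem sum_norm_expSum_pow_four_le (χ : AddChar F ℂ) (E : Finset (Fin d → F)) {A s : ℝ}
    (hL4 : lpNorm χ E 4 ≤ A * ((Fintype.card F : ℝ) ^ d)⁻¹ * (#E : ℝ) ^ (1 - s)) :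
    ∑ m with m ≠ 0, ‖expSum χ E m‖ ^ 4 ≤
      A ^ 4 * (Fintype.card F : ℝ) ^ d * (#E : ℝ) ^ (4 - 4 * s) := by
  have hq : (0 : ℝ) < (Fintype.card F : ℝ) ^ d := by positivity
  have hlp : 0 ≤ lpNorm χ E 4 := Real.rpow_nonneg (by positivity) _
  rw [sum_norm_expSum_pow_four_eq]
  calc (Fintype.card F : ℝ) ^ (5 * d) * lpNorm χ E 4 ^ 4
      ≤ (Fintype.card F : ℝ) ^ (5 * d) *
          (A * ((Fintype.card F : ℝ) ^ d)⁻¹ * (#E : ℝ) ^ (1 - s)) ^ 4 := by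
        gcongr
    _ = A ^ 4 * (Fintype.card F : ℝ) ^ d * (#E : ℝ) ^ (4 - 4 * s) := by
        rw [mul_pow, mul_pow, ← Real.rpow_natCast (_ ^ (1 - s)), ← Real.rpow_mul (by positivity)]
        field_simp
        ring_nf

end Fourier

theorem inv_mul_min_le_of_mul_le {q N D B : ℝ} {d : ℕ} {s : ℝ} (hq : 0 < q) (hN : 0 < N)
    (hD : 0 ≤ D) (hB : 0 ≤ B)
    (h : q * N ^ 4 ≤ D * (3 * N ^ 4 + 2 * (B * q ^ d * N ^ (4 - 4 * s)))) :
    (3 + 2 * B)⁻¹ * min q (q ^ ((1 : ℝ) - d) * N ^ (4 * s)) ≤ D := by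
  set M := min q (q ^ ((1 : ℝ) - d) * N ^ (4 * s))
  have hM0 : 0 ≤ M := le_min hq.le (by positivity)
  have hqd : q ^ ((1 : ℝ) - d) * q ^ d = q := by
    rw [← Real.rpow_natCast, ← Real.rpow_add hq, sub_add_cancel, Real.rpow_one]
  have hN4 : N ^ (4 * s) * N ^ (4 - 4 * s) = N ^ 4 := by
    rw [← Real.rpow_add hN, add_sub_cancel, ← Real.rpow_natCast]
    norm_num
  have hMR : M * (3 * N ^ 4 + 2 * (B * q ^ d * N ^ (4 - 4 * s))) ≤ (3 + 2 * B) * q * N ^ 4 := by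
    have h1 : M * N ^ 4 ≤ q * N ^ 4 := by gcongr; exact min_le_left _ _
    have h2 : M * (B * q ^ d * N ^ (4 - 4 * s)) ≤ B * q * N ^ 4 := by
      calc M * (B * q ^ d * N ^ (4 - 4 * s))
          ≤ q ^ ((1 : ℝ) - d) * N ^ (4 * s) * (B * q ^ d * N ^ (4 - 4 * s)) := by
            gcongr; exact min_le_right _ _
        _ = B * (q ^ ((1 : ℝ) - d) * q ^ d) * (N ^ (4 * s) * N ^ (4 - 4 * s)) := by ring
        _ = B * q * N ^ 4 := by rw [hqd, hN4]
    linarith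
  have hqN : 0 < q * N ^ 4 := by positivity
  rw [inv_mul_le_iff₀ (by positivity)]
  refine le_of_mul_le_mul_right ?_ hqN
  calc M * (q * N ^ 4) ≤ M * (D * (3 * N ^ 4 + 2 * (B * q ^ d * N ^ (4 - 4 * s)))) := by gcongr
    _ = D * (M * (3 * N ^ 4 + 2 * (B * q ^ d * N ^ (4 - 4 * s)))) := by ring
    _ ≤ D * ((3 + 2 * B) * q * N ^ 4) := by gcongr
    _ = (3 + 2 * B) * D * (q * N ^ 4) := by ring

theorem distance_set_bound_general (d : ℕ) (hd : 2 ≤ d) (s : ℝ)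
    (A : ℝ) :
    ∃ C c : ℝ, 0 < C ∧ 0 < c ∧
      ∀ (F : Type) [Field F] [Fintype F] [DecidableEq F],
        Odd (Fintype.card F) →
        ∀ χ : AddChar F ℂ, (∃ a, χ a ≠ 1) →
        ∀ E : Finset (Fin d → F),
          C * (Fintype.card F : ℝ) ^ ((d : ℝ) / 2) ≤ (E.card : ℝ) →
          lpNorm χ E 4 ≤ A * ((Fintype.card F : ℝ) ^ d)⁻¹ * (E.card : ℝ) ^ (1 - s) →
          c * min ((Fintype.card F : ℝ))
              ((Fintype.card F : ℝ) ^ ((1 : ℝ) - (d : ℝ)) * (E.card : ℝ) ^ (4 * s)) ≤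
            ((((E ×ˢ E).image fun z : (Fin d → F) × (Fin d → F) =>
                ∑ i, (z.1 i - z.2 i) ^ 2).card : ℝ)) := by
  refine ⟨1, (3 + 2 * A ^ 4)⁻¹, one_pos, by positivity, ?_⟩
  intro F _ _ _ hodd χ hχ E hsize hL4
  obtain ⟨n, rfl⟩ : ∃ n, d = n + 1 := ⟨d - 1, by omega⟩
  have h2 : (2 : F) ≠ 0 := Ring.two_ne_zero fun h =>
    Nat.not_even_iff_odd.2 hodd (Nat.even_iff.2 (FiniteField.even_card_iff_char_two.1 h))
  have hE : (0 : ℝ) < #E := lt_of_lt_of_le (by positivity) hsize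
  change _ ≤ ((#((E ×ˢ E).image fun p => sqNorm (p.1 - p.2)) : ℕ) : ℝ)
  set D := #((E ×ˢ E).image fun p => sqNorm (p.1 - p.2))
  have hCS : (#E : ℝ) ^ 4 ≤ D * distanceEnergy E := by
    have := sq_card_le_card_image_mul_sum_card_fiber (E ×ˢ E) fun p => sqNorm (p.1 - p.2)
    rw [card_product, ← pow_two, ← pow_mul] at this
    exact_mod_cast this
  have henergy := card_mul_distanceEnergy_le (AddChar.ne_one_iff.2 hχ) h2 E
  have hfourier := sum_norm_expSum_pow_four_le χ E hL4
  refine inv_mul_min_le_of_mul_le (by positivity) hE (Nat.cast_nonneg D) (by positivity) ?_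
  have hq : (0 : ℝ) < Fintype.card F := by positivity
  nlinarith [mul_le_mul_of_nonneg_left hCS hq.le, mul_le_mul_of_nonneg_left henergy
    (Nat.cast_nonneg D), mul_le_mul_of_nonneg_left hfourier (Nat.cast_nonneg (α := ℝ) D)]

/-- Distance sets from `L⁴` Fourier bounds: fix `d ≥ 2`, `s ∈ (0,1/2]`, `A ≥ 1`. There
are `C, c > 0` such that for every finite field of odd order `q` and every
`E ⊆ F_q^d` with `#E ≥ C q^{d/2}` and `‖Ê‖₄ ≤ A q^{-d} (#E)^{1-s}`, the distance set
`D(E) = {∑ᵢ (xᵢ - yᵢ)² : x, y ∈ E}` satisfies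
`#D(E) ≥ c · min( q, q^{1-d} (#E)^{4s} )`. -/
theorem distance_set_bound (d : ℕ) (hd : 2 ≤ d) (s : ℝ) (hs0 : 0 < s) (hs1 : s ≤ 1 / 2)
    (A : ℝ) (hA : 1 ≤ A) :
    ∃ C c : ℝ, 0 < C ∧ 0 < c ∧
      ∀ (F : Type) [Field F] [Fintype F] [DecidableEq F],
        Odd (Fintype.card F) →
        ∀ χ : AddChar F ℂ, (∃ a, χ a ≠ 1) →
        ∀ E : Finset (Fin d → F),
          C * (Fintype.card F : ℝ) ^ ((d : ℝ) / 2) ≤ (E.card : ℝ) →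
          lpNorm χ E 4 ≤ A * ((Fintype.card F : ℝ) ^ d)⁻¹ * (E.card : ℝ) ^ (1 - s) →
          c * min ((Fintype.card F : ℝ))
              ((Fintype.card F : ℝ) ^ ((1 : ℝ) - (d : ℝ)) * (E.card : ℝ) ^ (4 * s)) ≤
            ((((E ×ˢ E).image fun z : (Fin d → F) × (Fin d → F) =>
                ∑ i, (z.1 i - z.2 i) ^ 2).card : ℝ)) :=
  distance_set_bound_general d hd s A
end
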